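/- Let c > 1 and let (x_n)_{n≥-k} be a solution of x_{n+1} = c x_{n-k}/(1 + x_n⋯x_{n-k}) with strictly positive initial conditions. Then (x_n) is bounded: there exists M > 0 with 0 < x_n ≤ M for all n. -/

import Mathlib

/-!
The product `P n = x n ⋯ x (n + k)` of a window of `k + 1` consecutive terms obeys the scalar
Beverton–Holt recurrence `P (n + 1) = c P n / (1 + P n)`, so it moves monotonically towards the fixed
point `c - 1` without crossing it. Shifting the window gives `x (n + k + 1) * P n = x n * P (n + 1)`: along each residue
class modulo `k + 1` the terms of `x` change by the factors `P (n + 1) / P n`. When `P` decreases these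
factors are at most `1`; when `P` increases, `x n / P n` cannot increase from one term of a residue
class to the next. Either way `x` stays bounded.
-/

open Finset

def windowProd {M : Type*} [CommMonoid M] (x : ℕ → M) (k n : ℕ) : M :=
  ∏ i ∈ range (k + 1), x (n + i)

noncomputable def bevertonHolt (c p : ℝ) : ℝ :=
  c * p / (1 + p)

theorem windowProd_mul_next {M : Type*} [CommMonoid M] (x : ℕ → M) (k n : ℕ) :
    windowProd x k n * x (n + k + 1) = x n * windowProd x k (n + 1) := by
  calc windowProd x k n * x (n + k + 1) = ∏ i ∈ range (k + 2), x (n + i) :=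
        (prod_range_succ _ _).symm
    _ = x n * windowProd x k (n + 1) := by
        rw [prod_range_succ', add_zero, mul_comm]
        exact congrArg _ (prod_congr rfl fun i _ => congrArg x (by omega))

theorem windowProd_pos {x : ℕ → ℝ} (hx : ∀ n, 0 < x n) (k n : ℕ) : 0 < windowProd x k n :=
  prod_pos fun _ _ => hx _

section LagRecurrence

variable {k : ℕ} {c : ℝ} {x : ℕ → ℝ}
  (hrec : ∀ n, x (n + k + 1) = c * x n / (1 + windowProd x k n))
include hrec

theorem pos_of_lag_rec (hc : 0 < c) (hinit : ∀ i ≤ k, 0 < x i) : ∀ n, 0 < x n := by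
  intro n
  induction n using Nat.strong_induction_on with
  | _ n ih =>
    rcases le_or_gt n k with hn | hn
    · exact hinit n hn
    · obtain ⟨m, rfl⟩ : ∃ m, n = m + k + 1 := ⟨n - (k + 1), by omega⟩
      rw [hrec]
      have hwindow : 0 < windowProd x k m :=
        prod_pos fun i hi => ih _ (by simp only [mem_range] at hi; omega)
      exact div_pos (mul_pos hc (ih m (by omega))) (by linarith)

theorem windowProd_succ (hx : ∀ n, 0 < x n) (n : ℕ) :
    windowProd x k (n + 1) = bevertonHolt c (windowProd x k n) := by
  have h := windowProd_mul_next x k n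
  rw [hrec] at h
  have hP := windowProd_pos hx k n
  have hxn := hx n
  unfold bevertonHolt
  field_simp at h ⊢
  linarith

end LagRecurrence

theorem bevertonHolt_mem_Icc_of_le {c p : ℝ} (hp : 0 < p) (h : p ≤ c - 1) :
    bevertonHolt c p ∈ Set.Icc p (c - 1) := by
  rw [Set.mem_Icc, bevertonHolt]
  constructor
  · rw [le_div_iff₀ (by linarith)]; nlinarith
  · rw [div_le_iff₀ (by linarith)]; nlinarith

theorem bevertonHolt_mem_Icc_of_ge {c p : ℝ} (hp : 0 < p) (h : c - 1 ≤ p) :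
    bevertonHolt c p ∈ Set.Icc (c - 1) p := by
  rw [Set.mem_Icc, bevertonHolt]
  constructor
  · rw [le_div_iff₀ (by linarith)]; nlinarith
  · rw [div_le_iff₀ (by linarith)]; nlinarith

section Orbit

variable {c : ℝ} {u : ℕ → ℝ} (hu : ∀ n, u (n + 1) = bevertonHolt c (u n)) (hpos : ∀ n, 0 < u n)
include hu hpos

theorem monotone_of_le_sub_one (h0 : u 0 ≤ c - 1) : Monotone u ∧ ∀ n, u n ≤ c - 1 := by
  have hle : ∀ n, u n ≤ c - 1 := by
    intro n
    induction n with
    | zero => exact h0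
    | succ n ih => rw [hu]; exact (bevertonHolt_mem_Icc_of_le (hpos n) ih).2
  refine ⟨monotone_nat_of_le_succ fun n => ?_, hle⟩
  rw [hu]; exact (bevertonHolt_mem_Icc_of_le (hpos n) (hle n)).1

theorem antitone_of_sub_one_le (h0 : c - 1 ≤ u 0) : Antitone u := by
  have hge : ∀ n, c - 1 ≤ u n := by
    intro n
    induction n with
    | zero => exact h0
    | succ n ih => rw [hu]; exact (bevertonHolt_mem_Icc_of_ge (hpos n) ih).1
  refine antitone_nat_of_succ_le fun n => ?_
  rw [hu]; exact (bevertonHolt_mem_Icc_of_ge (hpos n) (hge n)).2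

end Orbit

/-- A comparison principle for `x (m + k + 1) = x m * (P (m + 1) / P m)`: a monotone majorant `G`
of the first `k + 1` terms stays a majorant as long as `G` grows at least as fast as `P` does. -/
theorem le_of_window_step {k : ℕ} {x P G : ℕ → ℝ}
    (hstep : ∀ m, P m * x (m + k + 1) = x m * P (m + 1)) (hP : ∀ n, 0 < P n) (hG : Monotone G)
    (hGP : ∀ m, G m * P (m + 1) ≤ G (m + 1) * P m) (hinit : ∀ i ≤ k, x i ≤ G i) :
    ∀ n, x n ≤ G n := by
  intro n
  induction n using Nat.strong_induction_on with
  | _ n ih =>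
    rcases le_or_gt n k with hn | hn
    · exact hinit n hn
    · obtain ⟨m, rfl⟩ : ∃ m, n = m + k + 1 := ⟨n - (k + 1), by omega⟩
      refine le_of_mul_le_mul_left ?_ (hP m)
      calc P m * x (m + k + 1) = x m * P (m + 1) := hstep m
        _ ≤ G m * P (m + 1) := mul_le_mul_of_nonneg_right (ih m (by omega)) (hP _).le
        _ ≤ G (m + 1) * P m := hGP m
        _ ≤ G (m + k + 1) * P m := mul_le_mul_of_nonneg_right (hG (by omega)) (hP m).le
        _ = P m * G (m + k + 1) := mul_comm _ _

theorem le_of_window_step_of_antitone {k : ℕ} {x P : ℕ → ℝ} {B : ℝ}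
    (hstep : ∀ m, P m * x (m + k + 1) = x m * P (m + 1)) (hP : ∀ n, 0 < P n) (hanti : Antitone P)
    (hB : 0 ≤ B) (hinit : ∀ i ≤ k, x i ≤ B) : ∀ n, x n ≤ B :=
  le_of_window_step hstep hP monotone_const
    (fun m => mul_le_mul_of_nonneg_left (hanti m.le_succ) hB) hinit

theorem le_of_window_step_of_monotone {k : ℕ} {x P : ℕ → ℝ} {B : ℝ}
    (hstep : ∀ m, P m * x (m + k + 1) = x m * P (m + 1)) (hP : ∀ n, 0 < P n) (hmono : Monotone P)
    (hB : 0 ≤ B) (hinit : ∀ i ≤ k, x i ≤ B) : ∀ n, x n ≤ B / P 0 * P n := by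
  have hscale : 0 ≤ B / P 0 := div_nonneg hB (hP 0).le
  refine le_of_window_step hstep hP (hmono.const_mul hscale) (fun m => by rw [mul_right_comm])
    fun i hi => ?_
  calc x i ≤ B := hinit i hi
    _ = B / P 0 * P 0 := (div_mul_cancel₀ B (hP 0).ne').symm
    _ ≤ B / P 0 * P i := mul_le_mul_of_nonneg_left (hmono (Nat.zero_le i)) hscale

theorem positive_solutions_bounded_general (k : ℕ) (c : ℝ) (hc : 1 < c)
    (x : ℕ → ℝ) (hinit : ∀ i : ℕ, i ≤ k → 0 < x i)
    (hrec : ∀ n : ℕ,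
      x (n + k + 1) = c * x n / (1 + ∏ i ∈ Finset.range (k + 1), x (n + i))) :
    ∃ M : ℝ, 0 < M ∧ ∀ n : ℕ, 0 < x n ∧ x n ≤ M := by
  have hx := pos_of_lag_rec hrec (by linarith) hinit
  set P := windowProd x k
  have hP : ∀ n, 0 < P n := windowProd_pos hx k
  have hPrec : ∀ n, P (n + 1) = bevertonHolt c (P n) := windowProd_succ hrec hx
  set S := ∑ i ∈ range (k + 1), x i
  have hS0 : 0 ≤ S := sum_nonneg fun j _ => (hx j).le
  have hS : ∀ i ≤ k, x i ≤ S := fun i hi =>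
    single_le_sum (fun j _ => (hx j).le) (mem_range.2 (Nat.lt_succ_of_le hi))
  suffices ∃ M, ∀ n, x n ≤ M by
    obtain ⟨M, hM⟩ := this
    exact ⟨M, (hx 0).trans_le (hM 0), fun n => ⟨hx n, hM n⟩⟩
  rcases le_total (P 0) (c - 1) with h0 | h0
  · obtain ⟨hmono, hle⟩ := monotone_of_le_sub_one hPrec hP h0
    refine ⟨S / P 0 * (c - 1), fun n => ?_⟩
    calc x n ≤ S / P 0 * P n :=
          le_of_window_step_of_monotone (windowProd_mul_next x k) hP hmono hS0 hS n
      _ ≤ S / P 0 * (c - 1) := mul_le_mul_of_nonneg_left (hle n) (div_nonneg hS0 (hP 0).le)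
  · exact ⟨S, le_of_window_step_of_antitone (windowProd_mul_next x k) hP
      (antitone_of_sub_one_le hPrec hP h0) hS0 hS⟩

/-- For c > 1, every solution with strictly positive initial data is bounded:
0 < x_n ≤ M for some M > 0.  (Indices shifted: x j here is x_{j-k}.) -/
theorem positive_solutions_bounded (k : ℕ) (hk : 1 ≤ k) (c : ℝ) (hc : 1 < c)
    (x : ℕ → ℝ) (hinit : ∀ i : ℕ, i ≤ k → 0 < x i)
    (hrec : ∀ n : ℕ,
      x (n + k + 1) = c * x n / (1 + ∏ i ∈ Finset.range (k + 1), x (n + i))) :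
    ∃ M : ℝ, 0 < M ∧ ∀ n : ℕ, 0 < x n ∧ x n ≤ M :=
  positive_solutions_bounded_general k c hc x hinit hrec
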